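/- arXiv:1801.05910 — 10 statements merged into one kernel-verified Lean document; each statement's English description precedes it below -/
import Mathlib

section
/- For all n ≥ 0, 3·J³ₙ + j³ₙ = 2^(n+1), where J³ₙ and j³ₙ are the third-order Jacobsthal and Jacobsthal-Lucas numbers. -/
def J3 : ℕ → ℤ
  | 0 => 0
  | 1 => 1
  | 2 => 1
  | n + 3 => J3 (n + 2) + J3 (n + 1) + 2 * J3 n

def j3 : ℕ → ℤ
  | 0 => 2
  | 1 => 1
  | 2 => 5
  | n + 3 => j3 (n + 2) + j3 (n + 1) + 2 * j3 n

def V3 (n : ℕ) : ℤ := if n % 3 = 0 then 2 else if n % 3 = 1 then -3 else 1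

/-! Both sides of the identity solve the recurrence `xₙ₊₃ = xₙ₊₂ + xₙ₊₁ + 2xₙ` — for `2ⁿ⁺¹`
because `2` is a root of `X³ - X² - X - 2` — and they agree at `n = 0, 1, 2`. -/

def jacobsthal3Rec : LinearRecurrence ℤ := ⟨3, ![2, 1, 1]⟩

namespace jacobsthal3Rec

theorem isSolution_iff {u : ℕ → ℤ} :
    jacobsthal3Rec.IsSolution u ↔ ∀ n, u (n + 3) = u (n + 2) + u (n + 1) + 2 * u n := by
  refine forall_congr' fun n => ?_
  change u (n + 3) = ∑ i : Fin 3, ![(2 : ℤ), 1, 1] i * u (n + i) ↔ _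
  simp only [Fin.sum_univ_three, Fin.isValue, Matrix.cons_val_zero, Matrix.cons_val_one,
    Matrix.cons_val, Fin.coe_ofNat_eq_mod, Nat.zero_mod, Nat.one_mod, Nat.mod_succ, add_zero,
    one_mul]
  constructor <;> intro h <;> linarith

theorem isSolution_J3 : jacobsthal3Rec.IsSolution J3 :=
  isSolution_iff.2 fun n => by rw [J3]

theorem isSolution_j3 : jacobsthal3Rec.IsSolution j3 :=
  isSolution_iff.2 fun n => by rw [j3]

theorem isSolution_two_pow_succ : jacobsthal3Rec.IsSolution fun n => 2 ^ (n + 1) :=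
  isSolution_iff.2 fun n => by ring

end jacobsthal3Rec

theorem stmt_0 : ∀ n : ℕ, 3 * J3 n + j3 n = 2 ^ (n + 1) := by
  have hsol : jacobsthal3Rec.IsSolution (3 • J3 + j3) :=
    jacobsthal3Rec.solSpace.add_mem (jacobsthal3Rec.solSpace.smul_mem 3
      jacobsthal3Rec.isSolution_J3) jacobsthal3Rec.isSolution_j3
  have hinit : Set.EqOn (3 • J3 + j3) (fun n => 2 ^ (n + 1)) ↑(Finset.range 3) := by
    intro n hn
    simp only [Finset.coe_range, Set.mem_Iio] at hn
    interval_cases n <;> rfl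
  intro n
  simpa using congrFun ((jacobsthal3Rec.eq_iff_eqOn_range_order _ _ hsol
    jacobsthal3Rec.isSolution_two_pow_succ).2 hinit) n
end

section
/- For all n ≥ 3, j³ₙ − 3·J³ₙ = 2·j³ₙ₋₃, where J³ₙ and j³ₙ are the third-order Jacobsthal and Jacobsthal-Lucas numbers. -/
theorem LinearRecurrence.IsSolution.comp_add_right {R : Type*} [CommSemiring R]
    {E : LinearRecurrence R} {u : ℕ → R} (hu : E.IsSolution u) (k : ℕ) :
    E.IsSolution (fun n => u (n + k)) := fun n => by
  simpa only [add_right_comm _ k] using hu (n + k)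

theorem jacobsthal3Rec_isSolution_iff (u : ℕ → ℤ) :
    jacobsthal3Rec.IsSolution u ↔ ∀ n, u (n + 3) = u (n + 2) + u (n + 1) + 2 * u n := by
  change (∀ n, u (n + 3) = ∑ i : Fin 3, ![(2 : ℤ), 1, 1] i * u (n + i)) ↔ _
  simp only [Fin.sum_univ_three]
  refine forall_congr' fun n => ?_
  simp only [Matrix.cons_val_zero, Matrix.cons_val_one, Matrix.cons_val_two,
    Matrix.head_cons, Matrix.tail_cons, Fin.val_zero, Fin.val_one, Fin.val_two, add_zero]
  constructor <;> intro h <;> rw [h] <;> ring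

theorem jacobsthal3Rec_isSolution_J3 : jacobsthal3Rec.IsSolution J3 :=
  (jacobsthal3Rec_isSolution_iff J3).2 fun _ => rfl

theorem jacobsthal3Rec_isSolution_j3 : jacobsthal3Rec.IsSolution j3 :=
  (jacobsthal3Rec_isSolution_iff j3).2 fun _ => rfl

theorem j3_add_three_sub_three_mul_J3 (n : ℕ) :
    j3 (n + 3) - 3 * J3 (n + 3) = 2 * j3 n := by
  have hJ : (fun k => J3 (k + 3)) ∈ jacobsthal3Rec.solSpace :=
    jacobsthal3Rec_isSolution_J3.comp_add_right 3
  have hj : (fun k => j3 (k + 3)) ∈ jacobsthal3Rec.solSpace :=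
    jacobsthal3Rec_isSolution_j3.comp_add_right 3
  have hlhs : jacobsthal3Rec.IsSolution fun k => j3 (k + 3) - 3 * J3 (k + 3) :=
    sub_mem hj (jacobsthal3Rec.solSpace.smul_mem 3 hJ)
  have hrhs : jacobsthal3Rec.IsSolution fun k => 2 * j3 k :=
    jacobsthal3Rec.solSpace.smul_mem 2 jacobsthal3Rec_isSolution_j3
  have hinit : Set.EqOn (fun k => j3 (k + 3) - 3 * J3 (k + 3)) (fun k => 2 * j3 k)
      (Finset.range 3 : Set ℕ) := by
    intro k hk
    simp only [Finset.coe_range, Set.mem_Iio] at hk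
    interval_cases k <;> rfl
  exact congrFun ((jacobsthal3Rec.eq_iff_eqOn_range_order _ _ hlhs hrhs).2 hinit) n

theorem stmt_1 : ∀ n : ℕ, 3 ≤ n → j3 n - 3 * J3 n = 2 * j3 (n - 3) := by
  intro n hn
  obtain ⟨m, rfl⟩ := Nat.exists_eq_add_of_le' hn
  simpa using j3_add_three_sub_three_mul_J3 m
end

section
/- For all n ≥ 0, J³ₙ₊₂ − 4·J³ₙ equals −2 if n ≡ 1 (mod 3), and equals 1 otherwise. -/
/-!
The characteristic polynomial of the recurrence factors as `x³ - x² - x - 2 = (x - 2)(x² + x + 1)`,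
so `J3 (n + 1) - 2 * J3 n` is annihilated by `x² + x + 1 ∣ x³ - 1` and is therefore 3-periodic.
Since `J3 (n + 2) - 4 * J3 n` is a combination of two shifts of it, it is 3-periodic as well,
and the theorem reduces to its three values at `n = 0, 1, 2`.
-/

theorem J3_add_three (n : ℕ) : J3 (n + 3) = J3 (n + 2) + J3 (n + 1) + 2 * J3 n := rfl

theorem periodic_J3_succ_sub_two_mul : Function.Periodic (fun n ↦ J3 (n + 1) - 2 * J3 n) 3 := by
  intro n
  simp only [J3_add_three (n + 1), J3_add_three n]
  ring

theorem periodic_J3_add_two_sub_four_mul :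
    Function.Periodic (fun n ↦ J3 (n + 2) - 4 * J3 n) 3 := by
  intro n
  have h₀ := periodic_J3_succ_sub_two_mul n
  have h₁ := periodic_J3_succ_sub_two_mul (n + 1)
  simp only at h₀ h₁ ⊢
  linear_combination h₁ + 2 * h₀

theorem stmt_2 : ∀ n : ℕ, J3 (n + 2) - 4 * J3 n = if n % 3 = 1 then -2 else 1 := by
  intro n
  rw [← periodic_J3_add_two_sub_four_mul.map_mod_nat n]
  have : n % 3 < 3 := Nat.mod_lt n (by norm_num)
  interval_cases n % 3 <;> rfl
end

section
/- For all n ≥ 0, j³ₙ − 4·J³ₙ equals 2 if n ≡ 0 (mod 3), equals −3 if n ≡ 1 (mod 3), and equals 1 if n ≡ 2 (mod 3). -/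
/-! Both `j3 - 4 • J3` and the `3`-periodic sequence `V3 = 2, -3, 1, …` solve the recurrence
`u (n + 3) = u (n + 2) + u (n + 1) + 2 u n` (for `V3` because `1 - 3 + 2 · 2 = 2`,
`2 + 1 - 2 · 3 = -3` and `-3 + 2 + 2 · 1 = 1`), and they agree at `0, 1, 2`; a solution is
determined by its first three terms. -/

namespace Jacobsthal3

/-- The recurrence `u (n + 3) = u (n + 2) + u (n + 1) + 2 u n`; `coeffs i` multiplies `u (n + i)`. -/
def recurrence : LinearRecurrence ℤ := ⟨3, ![2, 1, 1]⟩

theorem isSolution_iff {u : ℕ → ℤ} :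
    recurrence.IsSolution u ↔ ∀ n, u (n + 3) = u (n + 2) + u (n + 1) + 2 * u n := by
  refine forall_congr' fun n => ?_
  change u (n + 3) = ∑ i : Fin 3, ![2, 1, 1] i * u (n + i) ↔ _
  rw [Fin.sum_univ_three]
  change u (n + 3) = 2 * u n + 1 * u (n + 1) + 1 * u (n + 2) ↔ _
  constructor <;> intro h <;> linarith

theorem isSolution_J3 : recurrence.IsSolution J3 :=
  isSolution_iff.mpr fun n => by rw [J3]

theorem isSolution_j3 : recurrence.IsSolution j3 :=
  isSolution_iff.mpr fun n => by rw [j3]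

theorem isSolution_V3 : recurrence.IsSolution V3 := by
  refine isSolution_iff.mpr fun n => ?_
  have h3 : (n + 3) % 3 = n % 3 := by omega
  have h2 : (n + 2) % 3 = (n % 3 + 2) % 3 := by omega
  have h1 : (n + 1) % 3 = (n % 3 + 1) % 3 := by omega
  have hlt : n % 3 < 3 := Nat.mod_lt n three_pos
  simp only [V3, h3, h2, h1]
  interval_cases n % 3 <;> norm_num

theorem sub_four_mul_eq_V3 : j3 - 4 • J3 = V3 := by
  have hsol : recurrence.IsSolution (j3 - 4 • J3) := by
    have hj := (recurrence.is_sol_iff_mem_solSpace _).mp isSolution_j3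
    have hJ := (recurrence.is_sol_iff_mem_solSpace _).mp isSolution_J3
    exact (recurrence.is_sol_iff_mem_solSpace _).mpr (sub_mem hj (Submodule.smul_mem _ 4 hJ))
  refine (recurrence.eq_iff_eqOn_range_order _ _ hsol isSolution_V3).mpr fun n hn => ?_
  obtain rfl | rfl | rfl : n = 0 ∨ n = 1 ∨ n = 2 := by
    simp only [recurrence, Finset.coe_range, Set.mem_Iio] at hn; omega
  all_goals decide

end Jacobsthal3

theorem stmt_3 : ∀ n : ℕ,
    j3 n - 4 * J3 n = if n % 3 = 0 then 2 else if n % 3 = 1 then -3 else 1 :=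
  fun n => congrFun Jacobsthal3.sub_four_mul_eq_V3 n
end

section
/- For all n ≥ 0, j³ₙ − J³ₙ₊₂ equals 1 if n ≡ 0 (mod 3), equals −1 if n ≡ 1 (mod 3), and equals 0 if n ≡ 2 (mod 3). -/
def IsJacobsthal3Rec {R : Type*} [Ring R] (u : ℕ → R) : Prop :=
  ∀ n, u (n + 3) = u (n + 2) + u (n + 1) + 2 * u n

theorem isJacobsthal3Rec_J3 : IsJacobsthal3Rec J3 := fun _ => rfl

theorem isJacobsthal3Rec_j3 : IsJacobsthal3Rec j3 := fun _ => rfl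

namespace IsJacobsthal3Rec

variable {R : Type*} [Ring R] {u v : ℕ → R}

theorem sub (hu : IsJacobsthal3Rec u) (hv : IsJacobsthal3Rec v) :
    IsJacobsthal3Rec (fun n => u n - v n) := fun n => by
  simp only [hu n, hv n, mul_sub]
  abel

theorem shift (hu : IsJacobsthal3Rec u) (k : ℕ) : IsJacobsthal3Rec (fun n => u (n + k)) :=
  fun n => by simpa only [Nat.add_right_comm _ _ k] using hu (n + k)

theorem window_sum_eq (hu : IsJacobsthal3Rec u) (n : ℕ) :
    u n + u (n + 1) + u (n + 2) = 2 ^ n * (u 0 + u 1 + u 2) := by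
  induction n with
  | zero => simp
  | succ n ih =>
    calc u (n + 1) + u (n + 2) + u (n + 3)
        = 2 * (u n + u (n + 1) + u (n + 2)) := by rw [hu n, two_mul, two_mul]; abel
      _ = 2 ^ (n + 1) * (u 0 + u 1 + u 2) := by rw [ih, pow_succ', mul_assoc]

theorem periodic (hu : IsJacobsthal3Rec u) (h : u 0 + u 1 + u 2 = 0) :
    Function.Periodic u 3 := fun n => by
  have h₀ := hu.window_sum_eq n
  have h₁ := hu.window_sum_eq (n + 1)
  rw [h, mul_zero] at h₀ h₁
  apply add_left_cancel (a := u (n + 1) + u (n + 2))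
  rw [h₁, ← h₀]
  abel

end IsJacobsthal3Rec

theorem stmt_5 : ∀ n : ℕ,
    j3 n - J3 (n + 2) = if n % 3 = 0 then 1 else if n % 3 = 1 then -1 else 0 := by
  intro n
  have hrec : IsJacobsthal3Rec (fun n => j3 n - J3 (n + 2)) :=
    isJacobsthal3Rec_j3.sub (isJacobsthal3Rec_J3.shift 2)
  have hper := hrec.periodic (by decide)
  rw [← hper.map_mod_nat n]
  have hlt : n % 3 < 3 := Nat.mod_lt n (by norm_num)
  interval_cases n % 3 <;> decide
end

section
/- For all n ≥ 3, (j³ₙ₋₃)² + 3·J³ₙ·j³ₙ = 4ⁿ, where J³ₙ and j³ₙ are the third-order Jacobsthal and Jacobsthal-Lucas numbers. -/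
def SatisfiesJ3Rec {R : Type*} [Semiring R] (u : ℕ → R) : Prop :=
  ∀ n, u (n + 3) = u (n + 2) + u (n + 1) + 2 * u n

theorem SatisfiesJ3Rec.ext {R : Type*} [Semiring R] {u v : ℕ → R}
    (hu : SatisfiesJ3Rec u) (hv : SatisfiesJ3Rec v)
    (h₀ : u 0 = v 0) (h₁ : u 1 = v 1) (h₂ : u 2 = v 2) : u = v := by
  funext n
  induction n using Nat.strong_induction_on with
  | _ n ih =>
    match n with
    | 0 => exact h₀
    | 1 => exact h₁
    | 2 => exact h₂
    | m + 3 => rw [hu, hv, ih m (by omega), ih (m + 1) (by omega), ih (m + 2) (by omega)]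

theorem satisfiesJ3Rec_two_pow {R : Type*} [CommSemiring R] :
    SatisfiesJ3Rec fun n ↦ (2 : R) ^ n :=
  fun n ↦ by ring

theorem V3_add_three (n : ℕ) : V3 (n + 3) = V3 n := by
  simp [V3]

theorem satisfiesJ3Rec_V3 : SatisfiesJ3Rec V3 := by
  intro n
  unfold V3
  split_ifs <;> omega

theorem seven_mul_J3 (n : ℕ) : 7 * J3 n = 2 ^ (n + 1) - V3 n := by
  have hJ : SatisfiesJ3Rec fun n ↦ 7 * J3 n := fun n ↦ by dsimp only; rw [J3]; ring
  have hV : SatisfiesJ3Rec fun n ↦ (2 : ℤ) ^ (n + 1) - V3 n := fun n ↦ by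
    linear_combination 2 * satisfiesJ3Rec_two_pow (R := ℤ) n - satisfiesJ3Rec_V3 n
  exact congrFun (hJ.ext hV rfl rfl rfl) n

theorem seven_mul_j3 (n : ℕ) : 7 * j3 n = 2 ^ (n + 3) + 3 * V3 n := by
  have hj : SatisfiesJ3Rec fun n ↦ 7 * j3 n := fun n ↦ by dsimp only; rw [j3]; ring
  have hV : SatisfiesJ3Rec fun n ↦ (2 : ℤ) ^ (n + 3) + 3 * V3 n := fun n ↦ by
    linear_combination 8 * satisfiesJ3Rec_two_pow (R := ℤ) n + 3 * satisfiesJ3Rec_V3 n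
  exact congrFun (hj.ext hV rfl rfl rfl) n

theorem stmt_6 : ∀ n : ℕ, 3 ≤ n → (j3 (n - 3)) ^ 2 + 3 * J3 n * j3 n = 4 ^ n := by
  intro n hn
  obtain ⟨m, rfl⟩ := Nat.exists_eq_add_of_le' hn
  rw [Nat.add_sub_cancel]
  have hj₀ := seven_mul_j3 m
  have hJ := seven_mul_J3 (m + 3)
  have hj := seven_mul_j3 (m + 3)
  rw [V3_add_three] at hJ hj
  have hfour : (4 : ℤ) ^ (m + 3) = (2 ^ (m + 3)) ^ 2 := by rw [sq, ← mul_pow]; norm_num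
  refine mul_left_cancel₀ (by norm_num : (49 : ℤ) ≠ 0) ?_
  linear_combination (7 * j3 m + 2 ^ (m + 3) + 3 * V3 m) * hj₀ + 3 * (7 * j3 (m + 3)) * hJ
    + 3 * (2 ^ (m + 4) - V3 m) * hj - 49 * hfour
end

section
/- For all n ≥ 0, the sum ∑_{k=0}^{n} J³ₖ equals J³ₙ₊₁ if n is not divisible by 3, and equals J³ₙ₊₁ − 1 if n is divisible by 3. -/
theorem sum_range_J3_sub_J3_add_three (n : ℕ) :
    ∑ k ∈ Finset.range (n + 4), J3 k - J3 (n + 4) =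
      ∑ k ∈ Finset.range (n + 1), J3 k - J3 (n + 1) := by
  rw [J3_add_three (n + 1)]
  simp only [Finset.sum_range_succ, J3_add_three]
  ring

theorem sum_range_J3_sub_J3 (n : ℕ) :
    ∑ k ∈ Finset.range (n + 1), J3 k - J3 (n + 1) = if 3 ∣ n then -1 else 0 := by
  induction n using Nat.strong_induction_on with
  | _ n ih =>
    match n with
    | 0 | 1 | 2 => simp [Finset.sum_range_succ, J3]
    | n + 3 =>
      rw [sum_range_J3_sub_J3_add_three, ih n (by omega)]
      simp only [Nat.dvd_add_self_right]

theorem stmt_7 : ∀ n : ℕ,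
    ∑ k ∈ Finset.range (n + 1), J3 k = if 3 ∣ n then J3 (n + 1) - 1 else J3 (n + 1) := by
  intro n
  have defect := sum_range_J3_sub_J3 n
  split_ifs at defect ⊢ <;> linarith
end

section
/- For all n ≥ 3, (j³ₙ)² − 9·(J³ₙ)² = 2^(n+2)·j³ₙ₋₃, where J³ₙ and j³ₙ are the third-order Jacobsthal and Jacobsthal-Lucas numbers. -/
def SatisfiesJacobsthalRec3 (f : ℕ → ℤ) : Prop :=
  ∀ n, f (n + 3) = f (n + 2) + f (n + 1) + 2 * f n

namespace SatisfiesJacobsthalRec3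

variable {f g : ℕ → ℤ}

theorem eq_of_eq_of_eq_of_eq (hf : SatisfiesJacobsthalRec3 f) (hg : SatisfiesJacobsthalRec3 g)
    (h0 : f 0 = g 0) (h1 : f 1 = g 1) (h2 : f 2 = g 2) : f = g := by
  funext n
  induction n using Nat.strong_induction_on with
  | _ n ih =>
    match n with
    | 0 => exact h0
    | 1 => exact h1
    | 2 => exact h2
    | m + 3 => rw [hf, hg, ih m (by omega), ih (m + 1) (by omega), ih (m + 2) (by omega)]

theorem add (hf : SatisfiesJacobsthalRec3 f) (hg : SatisfiesJacobsthalRec3 g) :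
    SatisfiesJacobsthalRec3 (fun n => f n + g n) := fun n => by
  dsimp only; rw [hf n, hg n]; ring

theorem sub (hf : SatisfiesJacobsthalRec3 f) (hg : SatisfiesJacobsthalRec3 g) :
    SatisfiesJacobsthalRec3 (fun n => f n - g n) := fun n => by
  dsimp only; rw [hf n, hg n]; ring

theorem const_mul (c : ℤ) (hf : SatisfiesJacobsthalRec3 f) :
    SatisfiesJacobsthalRec3 (fun n => c * f n) := fun n => by
  dsimp only; rw [hf n]; ring

theorem shift (k : ℕ) (hf : SatisfiesJacobsthalRec3 f) :
    SatisfiesJacobsthalRec3 (fun n => f (n + k)) := fun n => by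
  simpa only [Nat.add_right_comm _ _ k] using hf (n + k)

end SatisfiesJacobsthalRec3

theorem satisfiesJacobsthalRec3_J3 : SatisfiesJacobsthalRec3 J3 := fun _ => rfl

theorem satisfiesJacobsthalRec3_j3 : SatisfiesJacobsthalRec3 j3 := fun _ => rfl

theorem satisfiesJacobsthalRec3_two_pow : SatisfiesJacobsthalRec3 (fun n => 2 ^ n) := fun n => by
  ring

theorem V3_add_V3_add_one_add_V3_add_two (n : ℕ) : V3 n + V3 (n + 1) + V3 (n + 2) = 0 := by
  rcases (by omega : n % 3 = 0 ∨ n % 3 = 1 ∨ n % 3 = 2) with h | h | h <;>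
    simp [V3, Nat.add_mod, h]

theorem satisfiesJacobsthalRec3_V3 : SatisfiesJacobsthalRec3 V3 := fun n => by
  linarith [V3_add_three n, V3_add_V3_add_one_add_V3_add_two n]

theorem stmt_8 : ∀ n : ℕ, 3 ≤ n →
    (j3 n) ^ 2 - 9 * (J3 n) ^ 2 = 2 ^ (n + 2) * j3 (n - 3) := by
  intro n hn
  obtain ⟨m, rfl⟩ : ∃ m, n = m + 3 := ⟨n - 3, by omega⟩
  rw [Nat.add_sub_cancel]
  have hJ := seven_mul_J3 (m + 3)
  have hj := seven_mul_j3 (m + 3)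
  have hj₀ := seven_mul_j3 m
  rw [V3_add_three] at hJ hj
  refine mul_left_cancel₀ (by norm_num : (49 : ℤ) ≠ 0) ?_
  calc 49 * (j3 (m + 3) ^ 2 - 9 * J3 (m + 3) ^ 2)
      = (7 * j3 (m + 3)) ^ 2 - 9 * (7 * J3 (m + 3)) ^ 2 := by ring
    _ = 7 * 2 ^ (m + 5) * (2 ^ (m + 3) + 3 * V3 m) := by rw [hJ, hj]; ring
    _ = 49 * (2 ^ (m + 3 + 2) * j3 m) := by rw [← hj₀]; ring
end

section
/- For all n ≥ 0, 7·J³ₙ = 2^(n+1) − Vₙ, where Vₙ is the 3-periodic sequence with Vₙ = 2 if n ≡ 0 (mod 3), Vₙ = −3 if n ≡ 1 (mod 3), and Vₙ = 1 if n ≡ 2 (mod 3). -/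
def IsJacobsthal3 {R : Type*} [Semiring R] (a : ℕ → R) : Prop :=
  ∀ n, a (n + 3) = a (n + 2) + a (n + 1) + 2 * a n

namespace IsJacobsthal3

variable {R : Type*}

theorem ext [Semiring R] {a b : ℕ → R} (ha : IsJacobsthal3 a) (hb : IsJacobsthal3 b)
    (h0 : a 0 = b 0) (h1 : a 1 = b 1) (h2 : a 2 = b 2) : a = b := by
  funext n
  induction n using Nat.strong_induction_on with
  | _ n ih =>
    match n with
    | 0 => exact h0
    | 1 => exact h1
    | 2 => exact h2
    | n + 3 => rw [ha, hb, ih n (by omega), ih (n + 1) (by omega), ih (n + 2) (by omega)]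

theorem const_mul [CommSemiring R] {a : ℕ → R} (ha : IsJacobsthal3 a) (c : R) :
    IsJacobsthal3 (fun n ↦ c * a n) := fun n ↦ by
  dsimp only
  rw [ha]
  ring

theorem sub [CommRing R] {a b : ℕ → R} (ha : IsJacobsthal3 a) (hb : IsJacobsthal3 b) :
    IsJacobsthal3 (fun n ↦ a n - b n) := fun n ↦ by
  dsimp only
  rw [ha, hb]
  ring

end IsJacobsthal3

theorem isJacobsthal3_J3 : IsJacobsthal3 J3 := fun n ↦ by rw [J3]

theorem isJacobsthal3_two_pow_succ {R : Type*} [CommSemiring R] :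
    IsJacobsthal3 (fun n ↦ (2 : R) ^ (n + 1)) := fun n ↦ by
  ring

theorem isJacobsthal3_V3 : IsJacobsthal3 V3 := fun n ↦ by
  simp only [V3]
  split_ifs <;> omega

theorem stmt_9 : ∀ n : ℕ, 7 * J3 n = 2 ^ (n + 1) - V3 n := by
  have h := (isJacobsthal3_J3.const_mul 7).ext (isJacobsthal3_two_pow_succ.sub isJacobsthal3_V3)
    (by decide) (by decide) (by decide)
  exact congrFun h
end

section
/- For all n ≥ 0, 7·j³ₙ = 2^(n+3) + 3·Vₙ, where Vₙ is the 3-periodic sequence with Vₙ = 2 if n ≡ 0 (mod 3), Vₙ = −3 if n ≡ 1 (mod 3), and Vₙ = 1 if n ≡ 2 (mod 3). -/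
namespace ThirdOrderJacobsthal

def recurrence (R : Type*) [CommSemiring R] : LinearRecurrence R := ⟨3, ![2, 1, 1]⟩

theorem isSolution_recurrence_iff {R : Type*} [CommSemiring R] {u : ℕ → R} :
    (recurrence R).IsSolution u ↔ ∀ n, u (n + 3) = u (n + 2) + u (n + 1) + 2 * u n := by
  show (∀ n, u (n + 3) = ∑ i : Fin 3, ![2, 1, 1] i * u (n + i)) ↔ _
  refine forall_congr' fun n ↦ ?_
  simp [Fin.sum_univ_three, add_assoc, add_comm]

theorem j3_mem_solSpace : j3 ∈ (recurrence ℤ).solSpace :=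
  isSolution_recurrence_iff.2 fun n ↦ by rw [j3]

theorem two_pow_mem_solSpace {R : Type*} [CommSemiring R] :
    (fun n ↦ (2 : R) ^ n) ∈ (recurrence R).solSpace :=
  isSolution_recurrence_iff.2 fun n ↦ by ring

theorem V3_add_three (n : ℕ) : V3 (n + 3) = V3 n := by
  simp only [V3, Nat.add_mod_right]

theorem V3_add_V3_add_one_add_V3_add_two (n : ℕ) : V3 n + V3 (n + 1) + V3 (n + 2) = 0 := by
  have h := Nat.mod_lt n (show 0 < 3 by norm_num)
  unfold V3
  split_ifs <;> omega

theorem V3_mem_solSpace : V3 ∈ (recurrence ℤ).solSpace :=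
  isSolution_recurrence_iff.2 fun n ↦ by
    linear_combination V3_add_three n - V3_add_V3_add_one_add_V3_add_two n

end ThirdOrderJacobsthal

open ThirdOrderJacobsthal in
theorem stmt_10 : ∀ n : ℕ, 7 * j3 n = 2 ^ (n + 3) + 3 * V3 n := by
  have key : (7 : ℤ) • j3 = (8 : ℤ) • (fun n ↦ (2 : ℤ) ^ n) + (3 : ℤ) • V3 := by
    rw [(recurrence ℤ).eq_iff_eqOn_range_order _ _
      (Submodule.smul_mem _ _ j3_mem_solSpace)
      (add_mem (Submodule.smul_mem _ _ two_pow_mem_solSpace)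
        (Submodule.smul_mem _ _ V3_mem_solSpace))]
    intro n hn
    simp only [recurrence, Finset.coe_range, Set.mem_Iio] at hn
    interval_cases n <;> rfl
  intro n
  simpa [pow_add, mul_comm] using congrFun key n
end
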